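/- arXiv:1512.07560 — 2 statements merged into one kernel-verified Lean document; each statement's English description precedes it below -/
import Mathlib

section
/- Let X be a nonempty compact subset of ℝ^p with the Euclidean distance d, let s : X → ℝ be continuous, and let x* ∈ X be a minimizer of s on X. Let ρ > 0, δ > 0, n₀ ≥ 2, and let (x_k)_{k ≥ 1} be a sequence in X with at least two distinct points among x_1, …, x_{n₀}. Suppose that for every m ≥ n₀ and every i ∈ {1, …, m} there are functions ŝ_{m,−i} : X → ℝ (the cross-validation sub-models at step m) such that: (interpolation) ŝ_{m,−i}(x_j) = s(x_j) for all j ∈ {1, …, m} with j ≠ i; (uniform boundedness) there exist constants L ≤ U with L ≤ ŝ_{m,−i}(x) ≤ U for all m ≥ n₀, i, and x ∈ X; (equicontinuity) for every x ∈ X and every ε > 0 there exists η > 0 such that for all m ≥ n₀, all i ∈ {1, …, m}, and all x' ∈ X with d(x, x') < η one has |ŝ_{m,−i}(x) − ŝ_{m,−i}(x')| < ε. Suppose moreover that for every m ≥ n₀ the next point maximizes the UP Expected Improvement: κ_m(x_{m+1}) = max_{x ∈ X} κ_m(x). Then x* is adherent to the sequence, i.e. x* belongs to the closure of {x_k : k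 ≥ 1}. -/
open scoped BigOperators

/-- The UP weight for a sequence of design points `x : ℕ → E` (indexed from 1): at step `m`,
the weight of the `i`-th cross-validation sub-model evaluated at `q`. -/
noncomputable def upWeightSeq {E : Type*} [MetricSpace E] (x : ℕ → E) (ρ : ℝ)
    (m i : ℕ) (q : E) : ℝ :=
  (1 - Real.exp (-(dist q (x i) ^ 2) / ρ ^ 2)) /
    ∑ j ∈ Finset.Icc 1 m, (1 - Real.exp (-(dist q (x j) ^ 2) / ρ ^ 2))

/-- The Universal Prediction Expected Improvement at step `m`:
`κ_m(q) = ∑_{i=1}^m w_{i,m}(q)·max(y*_m − ŝ_{m,−i}(q), 0) + δ·inf{d(q,x_j) : 1 ≤ j ≤ m}`,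
where `y*_m = min_{1 ≤ j ≤ m} s(x_j)` and `ŝ_{m,−i} = shat m i` are the
cross-validation sub-models. -/
noncomputable def upKappa {E : Type*} [MetricSpace E] (x : ℕ → E) (s : E → ℝ)
    (shat : ℕ → ℕ → E → ℝ) (ρ δ : ℝ) (m : ℕ) (q : E) : ℝ :=
  (∑ i ∈ Finset.Icc 1 m,
      upWeightSeq x ρ m i q * max ((⨅ j : Finset.Icc 1 m, s (x j)) - shat m i q) 0) +
    δ * ⨅ j : Finset.Icc 1 m, dist q (x j)

private lemma upEGO_arith_aux (δ ε₀ ρ2 D₀ C r : ℝ) (hδ : 0 < δ) (hε₀ : 0 < ε₀)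
    (hρ2 : 0 < ρ2) (hD₀ : 0 < D₀) (hC : 0 ≤ C) (hr : 0 < r) (hr1 : r ≤ 1)
    (hrC : r ≤ δ * ε₀ * ρ2 * D₀ / (16 * (C + 1))) :
    4 * r ^ 2 / ρ2 / D₀ * C ≤ δ * ε₀ / 4 := by
  have key : r * (16 * (C + 1)) ≤ δ * ε₀ * ρ2 * D₀ :=
    (le_div_iff₀ (by positivity)).1 hrC
  have hr2 : r ^ 2 ≤ r := by nlinarith
  have h16 : 16 * (r ^ 2 * C) ≤ δ * ε₀ * ρ2 * D₀ := by nlinarith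
  rw [div_div, div_mul_eq_mul_div,
    div_le_div_iff₀ (by positivity) (by norm_num : (0:ℝ) < 4)]
  nlinarith

set_option maxHeartbeats 1000000 in
/-- Theorem 1 of the paper, convergence of the UP-EGO algorithm:
for a continuous interpolating surrogate model bounded on the compact set `K`,
any minimizer `x*` of `s` on `K` is adherent to the sequence of points generated by
the UP-EGO algorithm. -/
theorem upEGO_minimizer_adherent {p : ℕ}
    (K : Set (EuclideanSpace ℝ (Fin p))) (hKc : IsCompact K) (hKne : K.Nonempty)
    (s : EuclideanSpace ℝ (Fin p) → ℝ) (hs : ContinuousOn s K)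
    (xstar : EuclideanSpace ℝ (Fin p)) (hxstar : xstar ∈ K)
    (hmin : ∀ q ∈ K, s xstar ≤ s q)
    (ρ δ : ℝ) (hρ : 0 < ρ) (hδ : 0 < δ)
    (n₀ : ℕ) (hn₀ : 2 ≤ n₀)
    (x : ℕ → EuclideanSpace ℝ (Fin p)) (hxK : ∀ k, 1 ≤ k → x k ∈ K)
    (htwo : ∃ k₁ ∈ Finset.Icc 1 n₀, ∃ k₂ ∈ Finset.Icc 1 n₀, x k₁ ≠ x k₂)
    (shat : ℕ → ℕ → EuclideanSpace ℝ (Fin p) → ℝ)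
    -- interpolation: each sub-model interpolates the retained data
    (hinterp : ∀ m, n₀ ≤ m → ∀ i ∈ Finset.Icc 1 m, ∀ j ∈ Finset.Icc 1 m, j ≠ i →
      shat m i (x j) = s (x j))
    -- uniform boundedness of the sub-models on K
    (hbdd : ∃ L U : ℝ, L ≤ U ∧ ∀ m, n₀ ≤ m → ∀ i ∈ Finset.Icc 1 m, ∀ q ∈ K,
      L ≤ shat m i q ∧ shat m i q ≤ U)
    -- equicontinuity of the sub-models on K
    (hcont : ∀ q ∈ K, ∀ ε > (0 : ℝ), ∃ η > (0 : ℝ), ∀ m, n₀ ≤ m →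
      ∀ i ∈ Finset.Icc 1 m, ∀ q' ∈ K, dist q q' < η →
        |shat m i q - shat m i q'| < ε)
    -- at each step the next point maximizes the UP Expected Improvement over K
    (hmax : ∀ m, n₀ ≤ m → ∀ q ∈ K,
      upKappa x s shat ρ δ m q ≤ upKappa x s shat ρ δ m (x (m + 1))) :
    xstar ∈ closure (x '' Set.Ici 1) := by
  by_contra hcl
  rw [Metric.mem_closure_iff] at hcl
  push_neg at hcl
  obtain ⟨ε₀, hε₀, hfar⟩ := hcl
  have hfar' : ∀ k, 1 ≤ k → ε₀ ≤ dist xstar (x k) := fun k hk => hfar _ ⟨k, hk, rfl⟩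
  -- constants
  obtain ⟨L, U, hLU, hLUb⟩ := hbdd
  obtain ⟨M, hM⟩ := hKc.exists_bound_of_continuousOn hs
  obtain ⟨C, hCdef⟩ : ∃ t : ℝ, t = |M| + |L| := ⟨_, rfl⟩
  have hC : 0 ≤ C := by rw [hCdef]; positivity
  obtain ⟨a, ha, b, hb, hab⟩ := htwo
  obtain ⟨c₀, hc₀def⟩ : ∃ t : ℝ, t = dist (x a) (x b) := ⟨_, rfl⟩
  have hc₀ : 0 < c₀ := by rw [hc₀def]; exact dist_pos.2 hab
  obtain ⟨D₀, hD₀def⟩ : ∃ t : ℝ, t = 1 - Real.exp (-((c₀ / 2) ^ 2) / ρ ^ 2) := ⟨_, rfl⟩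
  have hD₀ : 0 < D₀ := by
    have h1 : Real.exp (-((c₀ / 2) ^ 2) / ρ ^ 2) < 1 := by
      rw [Real.exp_lt_one_iff]
      apply div_neg_of_neg_of_pos
      · simpa using pow_pos (by linarith : (0:ℝ) < c₀ / 2) 2
      · exact pow_pos hρ 2
    rw [hD₀def]
    linarith
  -- basic nonnegativity facts
  have hnum_nonneg : ∀ (q : EuclideanSpace ℝ (Fin p)) (j : ℕ),
      0 ≤ 1 - Real.exp (-(dist q (x j) ^ 2) / ρ ^ 2) := by
    intro q j
    have h1 : Real.exp (-(dist q (x j) ^ 2) / ρ ^ 2) ≤ 1 := by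
      rw [Real.exp_le_one_iff]
      exact div_nonpos_of_nonpos_of_nonneg (neg_nonpos.2 (sq_nonneg _)) (sq_nonneg ρ)
    linarith
  have hw_nonneg : ∀ m i (q : EuclideanSpace ℝ (Fin p)), 0 ≤ upWeightSeq x ρ m i q :=
    fun m i q => div_nonneg (hnum_nonneg q i) (Finset.sum_nonneg fun j _ => hnum_nonneg q j)
  -- lower bound on the optimal kappa at every step
  have hlow : ∀ m, n₀ ≤ m → δ * ε₀ ≤ upKappa x s shat ρ δ m (x (m + 1)) := by
    intro m hm
    have hmem1 : (1 : ℕ) ∈ Finset.Icc 1 m := Finset.mem_Icc.2 ⟨le_refl 1, by omega⟩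
    haveI hne : Nonempty (Finset.Icc 1 m) := ⟨⟨1, hmem1⟩⟩
    have h1 : δ * ε₀ ≤ upKappa x s shat ρ δ m xstar := by
      unfold upKappa
      have hEEI : (0:ℝ) ≤ ∑ i ∈ Finset.Icc 1 m,
          upWeightSeq x ρ m i xstar *
            max ((⨅ j : Finset.Icc 1 m, s (x j)) - shat m i xstar) 0 :=
        Finset.sum_nonneg fun i _ => mul_nonneg (hw_nonneg m i xstar) (le_max_right _ _)
      have hinf : ε₀ ≤ ⨅ j : Finset.Icc 1 m, dist xstar (x j) :=
        le_ciInf fun j => hfar' j (Finset.mem_Icc.1 j.2).1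
      have := mul_le_mul_of_nonneg_left hinf (le_of_lt hδ)
      linarith
    exact h1.trans (hmax m hm xstar hxstar)
  -- cluster point of the sequence
  have huK : ∀ n : ℕ, x (n + n₀ + 1) ∈ K := fun n => hxK _ (by omega)
  obtain ⟨z, hzK, φ, hφ, hconv⟩ := hKc.tendsto_subseq huK
  -- epsilon / eta / radius
  obtain ⟨ε, hεdef⟩ : ∃ t : ℝ, t = δ * ε₀ / 8 := ⟨_, rfl⟩
  have hε : 0 < ε := by rw [hεdef]; positivity
  obtain ⟨η, hη, hηs⟩ := hcont z hzK ε hε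
  obtain ⟨r, hrdef⟩ : ∃ t : ℝ,
      t = min η (min 1 (min (ε₀ / 8) (δ * ε₀ * ρ ^ 2 * D₀ / (16 * (C + 1))))) := ⟨_, rfl⟩
  have hr : 0 < r := by
    rw [hrdef]
    apply lt_min hη
    apply lt_min one_pos
    apply lt_min (by positivity)
    positivity
  have hrη : r ≤ η := by rw [hrdef]; exact min_le_left _ _
  have hr1 : r ≤ 1 := by
    rw [hrdef]; exact le_trans (min_le_right _ _) (min_le_left _ _)
  have hrε₀ : r ≤ ε₀ / 8 := by
    rw [hrdef]
    exact le_trans (min_le_right _ _) (le_trans (min_le_right _ _) (min_le_left _ _))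
  have hrC : r ≤ δ * ε₀ * ρ ^ 2 * D₀ / (16 * (C + 1)) := by
    rw [hrdef]
    exact le_trans (min_le_right _ _) (le_trans (min_le_right _ _) (min_le_right _ _))
  obtain ⟨N, hN⟩ := Metric.tendsto_atTop.1 hconv r hr
  -- the two close points
  obtain ⟨k₁, hk₁def⟩ : ∃ t : ℕ, t = φ N + n₀ + 1 := ⟨_, rfl⟩
  obtain ⟨m, hmdef⟩ : ∃ t : ℕ, t = φ (N + 1) + n₀ := ⟨_, rfl⟩
  have hm : n₀ ≤ m := by omega
  have hφlt : φ N < φ (N + 1) := hφ (Nat.lt_succ_self N)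
  have hk₁m : k₁ ∈ Finset.Icc 1 m := Finset.mem_Icc.2 ⟨by omega, by omega⟩
  have hmem1 : (1 : ℕ) ∈ Finset.Icc 1 m := Finset.mem_Icc.2 ⟨le_refl 1, by omega⟩
  haveI hne : Nonempty (Finset.Icc 1 m) := ⟨⟨1, hmem1⟩⟩
  have hd1 : dist (x k₁) z < r := by
    have := hN N le_rfl
    simpa [hk₁def] using this
  have hd2 : dist (x (m + 1)) z < r := by
    have := hN (N + 1) (Nat.le_succ N)
    simpa [hmdef] using this
  obtain ⟨q, hqdef⟩ : ∃ t : EuclideanSpace ℝ (Fin p), t = x (m + 1) := ⟨_, rfl⟩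
  rw [← hqdef] at hd2
  have hqK : q ∈ K := by rw [hqdef]; exact hxK (m + 1) (by omega)
  have hxk₁K : x k₁ ∈ K := hxK k₁ (by omega)
  have hdqk₁ : dist q (x k₁) < 2 * r := by
    calc dist q (x k₁) ≤ dist q z + dist z (x k₁) := dist_triangle _ _ _
    _ < r + r := by rw [dist_comm z (x k₁)]; exact add_lt_add hd2 hd1
    _ = 2 * r := by ring
  -- denominator lower bound
  obtain ⟨D, hDdef⟩ : ∃ t : ℝ,
      t = ∑ j ∈ Finset.Icc 1 m, (1 - Real.exp (-(dist q (x j) ^ 2) / ρ ^ 2)) := ⟨_, rfl⟩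
  have hDD₀ : D₀ ≤ D := by
    have hsplit : c₀ / 2 ≤ dist q (x a) ∨ c₀ / 2 ≤ dist q (x b) := by
      by_contra hcon
      push_neg at hcon
      have htri : dist (x a) (x b) ≤ dist (x a) q + dist q (x b) := dist_triangle _ _ _
      rw [dist_comm (x a) q] at htri
      rw [← hc₀def] at htri
      linarith [hcon.1, hcon.2]
    obtain ⟨j, hjIcc, hj⟩ : ∃ j ∈ Finset.Icc 1 m, c₀ / 2 ≤ dist q (x j) := by
      rcases hsplit with h | h
      · exact ⟨a, Finset.mem_Icc.2 ⟨(Finset.mem_Icc.1 ha).1,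
          le_trans (Finset.mem_Icc.1 ha).2 hm⟩, h⟩
      · exact ⟨b, Finset.mem_Icc.2 ⟨(Finset.mem_Icc.1 hb).1,
          le_trans (Finset.mem_Icc.1 hb).2 hm⟩, h⟩
    have hterm : D₀ ≤ 1 - Real.exp (-(dist q (x j) ^ 2) / ρ ^ 2) := by
      have h1 : (c₀ / 2) ^ 2 ≤ dist q (x j) ^ 2 :=
        pow_le_pow_left₀ (by linarith) hj 2
      have h2 : Real.exp (-(dist q (x j) ^ 2) / ρ ^ 2) ≤
          Real.exp (-((c₀ / 2) ^ 2) / ρ ^ 2) := by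
        apply Real.exp_le_exp.2
        apply (div_le_div_iff_of_pos_right (pow_pos hρ 2)).2
        linarith
      rw [hD₀def]
      linarith
    rw [hDdef]
    calc D₀ ≤ 1 - Real.exp (-(dist q (x j) ^ 2) / ρ ^ 2) := hterm
    _ ≤ _ := Finset.single_le_sum (fun i _ => hnum_nonneg q i) hjIcc
  have hDpos : 0 < D := lt_of_lt_of_le hD₀ hDD₀
  -- weights sum to one
  have hwsum : ∑ i ∈ Finset.Icc 1 m, upWeightSeq x ρ m i q = 1 := by
    unfold upWeightSeq
    rw [← Finset.sum_div, ← hDdef]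
    exact div_self (ne_of_gt hDpos)
  -- current best value
  obtain ⟨ystar, hystardef⟩ : ∃ t : ℝ, t = ⨅ j : Finset.Icc 1 m, s (x j) := ⟨_, rfl⟩
  have hystar_le : ystar ≤ s (x k₁) := by
    rw [hystardef]
    exact ciInf_le (Set.Finite.bddBelow (Set.finite_range _)) (⟨k₁, hk₁m⟩ : Finset.Icc 1 m)
  have hsxk₁M : s (x k₁) ≤ |M| := le_trans (le_abs_self _)
    (le_trans (hM _ hxk₁K) (le_abs_self M))
  -- per-index bounds on the improvement terms
  have hmax_far : ∀ i ∈ Finset.Icc 1 m, i ≠ k₁ →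
      max (ystar - shat m i q) 0 ≤ 2 * ε := by
    intro i hi hik
    have h1 : shat m i (x k₁) = s (x k₁) :=
      hinterp m hm i hi k₁ hk₁m (fun h => hik h.symm)
    have h2 : |shat m i z - shat m i (x k₁)| < ε := by
      apply hηs m hm i hi (x k₁) hxk₁K
      rw [dist_comm]
      exact lt_of_lt_of_le hd1 hrη
    have h3 : |shat m i z - shat m i q| < ε := by
      apply hηs m hm i hi q hqK
      rw [dist_comm]
      exact lt_of_lt_of_le hd2 hrη
    rw [abs_sub_lt_iff] at h2 h3
    apply max_le _ (by linarith)
    have h4 : s (x k₁) - shat m i q < 2 * ε := by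
      rw [← h1]; linarith [h2.1, h2.2, h3.1, h3.2]
    linarith
  have hmax_k₁ : max (ystar - shat m k₁ q) 0 ≤ C := by
    have hL : L ≤ shat m k₁ q := (hLUb m hm k₁ hk₁m q hqK).1
    apply max_le _ hC
    have h5 : -L ≤ |L| := neg_le_abs L
    rw [hCdef]
    linarith
  -- weight of k₁ is small
  have hwk₁ : upWeightSeq x ρ m k₁ q ≤ 4 * r ^ 2 / ρ ^ 2 / D₀ := by
    have hnum_le : 1 - Real.exp (-(dist q (x k₁) ^ 2) / ρ ^ 2) ≤ 4 * r ^ 2 / ρ ^ 2 := by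
      rw [neg_div]
      have h1 := Real.add_one_le_exp (-(dist q (x k₁) ^ 2 / ρ ^ 2))
      have h2 : dist q (x k₁) ^ 2 ≤ 4 * r ^ 2 := by
        nlinarith [dist_nonneg (x := q) (y := x k₁), hdqk₁, hr]
      have h3 : dist q (x k₁) ^ 2 / ρ ^ 2 ≤ 4 * r ^ 2 / ρ ^ 2 :=
        (div_le_div_iff_of_pos_right (pow_pos hρ 2)).2 h2
      linarith
    unfold upWeightSeq
    rw [← hDdef]
    exact div_le_div₀ (by positivity) hnum_le hD₀ hDD₀
  -- bound the EEI sum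
  have hEEI_bound : ∑ i ∈ Finset.Icc 1 m,
      upWeightSeq x ρ m i q * max (ystar - shat m i q) 0 ≤
      2 * ε + 4 * r ^ 2 / ρ ^ 2 / D₀ * C := by
    rw [← Finset.sum_erase_add _ _ hk₁m]
    have h1 : ∑ i ∈ (Finset.Icc 1 m).erase k₁,
        upWeightSeq x ρ m i q * max (ystar - shat m i q) 0 ≤ 2 * ε := by
      calc ∑ i ∈ (Finset.Icc 1 m).erase k₁,
          upWeightSeq x ρ m i q * max (ystar - shat m i q) 0
          ≤ ∑ i ∈ (Finset.Icc 1 m).erase k₁, upWeightSeq x ρ m i q * (2 * ε) := by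
            apply Finset.sum_le_sum
            intro i hi
            exact mul_le_mul_of_nonneg_left
              (hmax_far i (Finset.mem_of_mem_erase hi) (Finset.ne_of_mem_erase hi))
              (hw_nonneg m i q)
        _ ≤ ∑ i ∈ Finset.Icc 1 m, upWeightSeq x ρ m i q * (2 * ε) := by
            apply Finset.sum_le_sum_of_subset_of_nonneg (Finset.erase_subset _ _)
            intro i _ _
            exact mul_nonneg (hw_nonneg m i q) (by positivity)
        _ = 2 * ε := by rw [← Finset.sum_mul, hwsum, one_mul]
    have h2 : upWeightSeq x ρ m k₁ q * max (ystar - shat m k₁ q) 0 ≤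
        4 * r ^ 2 / ρ ^ 2 / D₀ * C :=
      mul_le_mul hwk₁ hmax_k₁ (le_max_right _ _) (by positivity)
    linarith
  -- bound the distance term
  have hinf_le : (⨅ j : Finset.Icc 1 m, dist q (x j)) ≤ 2 * r := by
    have h1 := ciInf_le (Set.Finite.bddBelow
      (Set.finite_range (fun j : Finset.Icc 1 m => dist q (x j)))) (⟨k₁, hk₁m⟩ : Finset.Icc 1 m)
    exact le_trans h1 (le_of_lt hdqk₁)
  -- assemble the contradiction
  have hkap : upKappa x s shat ρ δ m q ≤
      2 * ε + 4 * r ^ 2 / ρ ^ 2 / D₀ * C + δ * (2 * r) := by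
    unfold upKappa
    have h2 : δ * (⨅ j : Finset.Icc 1 m, dist q (x j)) ≤ δ * (2 * r) :=
      mul_le_mul_of_nonneg_left hinf_le (le_of_lt hδ)
    have h3 := hEEI_bound
    rw [hystardef] at h3
    linarith
  have hfinal : 2 * ε + 4 * r ^ 2 / ρ ^ 2 / D₀ * C + δ * (2 * r) < δ * ε₀ := by
    have hρ2 : (0:ℝ) < ρ ^ 2 := pow_pos hρ 2
    have hterm2 : 4 * r ^ 2 / ρ ^ 2 / D₀ * C ≤ δ * ε₀ / 4 :=
      upEGO_arith_aux δ ε₀ (ρ ^ 2) D₀ C r hδ hε₀ hρ2 hD₀ hC hr hr1 hrC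
    have hterm3 : δ * (2 * r) ≤ δ * ε₀ / 4 := by
      have h1 : 2 * r ≤ ε₀ / 4 := by linarith
      have h2 := mul_le_mul_of_nonneg_left h1 hδ.le
      linarith
    have hterm1 : 2 * ε = δ * ε₀ / 4 := by rw [hεdef]; ring
    have hpos : (0:ℝ) < δ * ε₀ := by positivity
    linarith
  have hcontr := hlow m hm
  rw [← hqdef] at hcontr
  linarith
end

section
/- Let X be a nonempty compact subset of ℝ^p with the Euclidean distance d, let s : X → ℝ be continuous, let ρ > 0, δ > 0, n₀ ≥ 2, and let (x_k)_{k ≥ 1} be a sequence in X with at least two distinct points among x_1, …, x_{n₀}. Suppose that for every m ≥ n₀ and every i ∈ {1, …, m} there are functions ŝ_{m,−i} : X → ℝ satisfying: ŝ_{m,−i}(x_j) = s(x_j) for all j ∈ {1, …, m} with j ≠ i; there exist constants L ≤ U with L ≤ ŝ_{m,−i}(x) ≤ U for all m ≥ n₀, i, x ∈ X; and for every x ∈ X and ε > 0 there exists η > 0 such that for all m ≥ n₀, all i ∈ {1, …, m}, and all x' ∈ X with d(x, x') < η one has |ŝ_{m,−i}(x) − ŝ_{m,−i}(x')| < ε.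 Suppose that for every m ≥ n₀ the next point satisfies κ_m(x_{m+1}) = max_{x ∈ X} κ_m(x). Then the maximal UP Expected Improvement comes arbitrarily close to zero infinitely often: liminf_{m → ∞} max_{x ∈ X} κ_m(x) = 0. -/
open scoped BigOperators

set_option maxHeartbeats 1000000 in
/-- key intermediate step in the proof of the UP-EGO convergence theorem:
under the same hypotheses as the convergence theorem, the maximal UP Expected Improvement
over `K` comes arbitrarily close to zero infinitely often:
`liminf_{m → ∞} max_{x ∈ K} κ_m(x) = 0`. -/
theorem upEGO_liminf_max_upKappa_eq_zero {p : ℕ}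
    (K : Set (EuclideanSpace ℝ (Fin p))) (hKc : IsCompact K) (hKne : K.Nonempty)
    (s : EuclideanSpace ℝ (Fin p) → ℝ) (hs : ContinuousOn s K)
    (ρ δ : ℝ) (hρ : 0 < ρ) (hδ : 0 < δ)
    (n₀ : ℕ) (hn₀ : 2 ≤ n₀)
    (x : ℕ → EuclideanSpace ℝ (Fin p)) (hxK : ∀ k, 1 ≤ k → x k ∈ K)
    (htwo : ∃ k₁ ∈ Finset.Icc 1 n₀, ∃ k₂ ∈ Finset.Icc 1 n₀, x k₁ ≠ x k₂)
    (shat : ℕ → ℕ → EuclideanSpace ℝ (Fin p) → ℝ)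
    -- interpolation: each sub-model interpolates the retained data
    (hinterp : ∀ m, n₀ ≤ m → ∀ i ∈ Finset.Icc 1 m, ∀ j ∈ Finset.Icc 1 m, j ≠ i →
      shat m i (x j) = s (x j))
    -- uniform boundedness of the sub-models on K
    (hbdd : ∃ L U : ℝ, L ≤ U ∧ ∀ m, n₀ ≤ m → ∀ i ∈ Finset.Icc 1 m, ∀ q ∈ K,
      L ≤ shat m i q ∧ shat m i q ≤ U)
    -- equicontinuity of the sub-models on K
    (hcont : ∀ q ∈ K, ∀ ε > (0 : ℝ), ∃ η > (0 : ℝ), ∀ m, n₀ ≤ m →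
      ∀ i ∈ Finset.Icc 1 m, ∀ q' ∈ K, dist q q' < η →
        |shat m i q - shat m i q'| < ε)
    -- at each step the next point maximizes the UP Expected Improvement over K
    (hmax : ∀ m, n₀ ≤ m → ∀ q ∈ K,
      upKappa x s shat ρ δ m q ≤ upKappa x s shat ρ δ m (x (m + 1))) :
    Filter.liminf (fun m => sSup (upKappa x s shat ρ δ m '' K)) Filter.atTop = 0 := by
  classical
  obtain ⟨L, U, hLU, hLUb⟩ := hbdd
  obtain ⟨k₁, hk₁, k₂, hk₂, hk12⟩ := htwo
  -- nonnegativity of the weight numerators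
  have hnum_nonneg : ∀ (q : EuclideanSpace ℝ (Fin p)) (i : ℕ),
      0 ≤ 1 - Real.exp (-(dist q (x i) ^ 2) / ρ ^ 2) := by
    intro q i
    have h1 : Real.exp (-(dist q (x i) ^ 2) / ρ ^ 2) ≤ 1 := by
      apply Real.exp_le_one_iff.2
      apply div_nonpos_of_nonpos_of_nonneg
      · simpa using sq_nonneg (dist q (x i))
      · positivity
    linarith
  have hden_nonneg : ∀ (q : EuclideanSpace ℝ (Fin p)) (m : ℕ),
      0 ≤ ∑ j ∈ Finset.Icc 1 m, (1 - Real.exp (-(dist q (x j) ^ 2) / ρ ^ 2)) :=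
    fun q m => Finset.sum_nonneg fun j _ => hnum_nonneg q j
  have hw_nonneg : ∀ (q : EuclideanSpace ℝ (Fin p)) (m i : ℕ), 0 ≤ upWeightSeq x ρ m i q :=
    fun q m i => div_nonneg (hnum_nonneg q i) (hden_nonneg q m)
  -- uniform denominator lower bound
  set c : ℝ := dist (x k₁) (x k₂) with hc_def
  have hc : 0 < c := dist_pos.2 hk12
  set D₀ : ℝ := 1 - Real.exp (-((c / 2) ^ 2) / ρ ^ 2) with hD₀_def
  have hD₀ : 0 < D₀ := by
    have h1 : Real.exp (-((c / 2) ^ 2) / ρ ^ 2) < 1 := by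
      apply Real.exp_lt_one_iff.2
      apply div_neg_of_neg_of_pos
      · have : 0 < (c / 2) ^ 2 := by positivity
        linarith
      · positivity
    simp only [hD₀_def]; linarith
  have hden_ge : ∀ (m : ℕ), n₀ ≤ m → ∀ q : EuclideanSpace ℝ (Fin p),
      D₀ ≤ ∑ j ∈ Finset.Icc 1 m, (1 - Real.exp (-(dist q (x j) ^ 2) / ρ ^ 2)) := by
    intro m hm q
    have hsub : Finset.Icc 1 n₀ ⊆ Finset.Icc 1 m := Finset.Icc_subset_Icc_right hm
    have htri : c ≤ dist q (x k₁) + dist q (x k₂) := by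
      calc c = dist (x k₁) (x k₂) := rfl
        _ ≤ dist (x k₁) q + dist q (x k₂) := dist_triangle _ _ _
        _ = dist q (x k₁) + dist q (x k₂) := by rw [dist_comm (x k₁) q]
    obtain ⟨j₀, hj₀m, hj₀d⟩ : ∃ j₀, j₀ ∈ Finset.Icc 1 m ∧ c / 2 ≤ dist q (x j₀) := by
      rcases le_or_gt (c / 2) (dist q (x k₁)) with h | h
      · exact ⟨k₁, hsub hk₁, h⟩
      · exact ⟨k₂, hsub hk₂, by linarith⟩
    have hnum_ge : D₀ ≤ 1 - Real.exp (-(dist q (x j₀) ^ 2) / ρ ^ 2) := by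
      have h2 : (c / 2) ^ 2 ≤ dist q (x j₀) ^ 2 :=
        pow_le_pow_left₀ (by linarith) hj₀d 2
      have h3 : Real.exp (-(dist q (x j₀) ^ 2) / ρ ^ 2)
          ≤ Real.exp (-((c / 2) ^ 2) / ρ ^ 2) := by
        apply Real.exp_le_exp.2
        exact div_le_div_of_nonneg_right (neg_le_neg h2) (by positivity)
      simp only [hD₀_def]; linarith
    calc D₀ ≤ 1 - Real.exp (-(dist q (x j₀) ^ 2) / ρ ^ 2) := hnum_ge
      _ ≤ _ := Finset.single_le_sum (fun j _ => hnum_nonneg q j) hj₀m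
  have hden_pos : ∀ (m : ℕ), n₀ ≤ m → ∀ q : EuclideanSpace ℝ (Fin p),
      0 < ∑ j ∈ Finset.Icc 1 m, (1 - Real.exp (-(dist q (x j) ^ 2) / ρ ^ 2)) :=
    fun m hm q => lt_of_lt_of_le hD₀ (hden_ge m hm q)
  -- weights sum to one
  have hw_sum : ∀ m, n₀ ≤ m → ∀ q : EuclideanSpace ℝ (Fin p),
      ∑ i ∈ Finset.Icc 1 m, upWeightSeq x ρ m i q = 1 := by
    intro m hm q
    unfold upWeightSeq
    rw [← Finset.sum_div]
    exact div_self (ne_of_gt (hden_pos m hm q))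
  -- bound on s over K
  obtain ⟨qM, hqM, hqMmax⟩ := hKc.exists_isMaxOn hKne hs
  set M : ℝ := s qM with hM_def
  have hM : ∀ q ∈ K, s q ≤ M := fun q hq => hqMmax hq
  set C : ℝ := max (M - L) 0 with hC_def
  have hC0 : 0 ≤ C := le_max_right _ _
  -- bound on the improvement terms
  have hmem1 : ∀ m, n₀ ≤ m → (1 : ℕ) ∈ Finset.Icc 1 m :=
    fun m hm => Finset.mem_Icc.2 ⟨le_rfl, by omega⟩
  have hystar_le : ∀ m, ∀ j ∈ Finset.Icc 1 m,
      (⨅ j : Finset.Icc 1 m, s (x j)) ≤ s (x j) := by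
    intro m j hj
    exact ciInf_le (Set.finite_range _).bddBelow (⟨j, hj⟩ : Finset.Icc 1 m)
  have hT_le_C : ∀ m, n₀ ≤ m → ∀ i ∈ Finset.Icc 1 m, ∀ q ∈ K,
      max ((⨅ j : Finset.Icc 1 m, s (x j)) - shat m i q) 0 ≤ C := by
    intro m hm i hi q hq
    have h1 : (⨅ j : Finset.Icc 1 m, s (x j)) ≤ M :=
      le_trans (hystar_le m 1 (hmem1 m hm)) (hM (x 1) (hxK 1 le_rfl))
    have h2 : L ≤ shat m i q := (hLUb m hm i hi q hq).1
    exact max_le_max (by linarith) le_rfl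
  -- nonnegativity of kappa
  have hκ_nonneg : ∀ (m : ℕ) (q : EuclideanSpace ℝ (Fin p)),
      0 ≤ upKappa x s shat ρ δ m q := by
    intro m q
    unfold upKappa
    apply add_nonneg
    · exact Finset.sum_nonneg fun i _ =>
        mul_nonneg (hw_nonneg q m i) (le_max_right _ _)
    · exact mul_nonneg hδ.le (Real.iInf_nonneg fun j => dist_nonneg)
  -- upper bound of kappa on K
  obtain ⟨R, hR⟩ := Metric.isBounded_iff.1 hKc.isBounded
  have hκ_le : ∀ m, n₀ ≤ m → ∀ q ∈ K, upKappa x s shat ρ δ m q ≤ C + δ * R := by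
    intro m hm q hq
    unfold upKappa
    apply add_le_add
    · calc ∑ i ∈ Finset.Icc 1 m,
            upWeightSeq x ρ m i q * max ((⨅ j : Finset.Icc 1 m, s (x j)) - shat m i q) 0
          ≤ ∑ i ∈ Finset.Icc 1 m, upWeightSeq x ρ m i q * C :=
            Finset.sum_le_sum fun i hi =>
              mul_le_mul_of_nonneg_left (hT_le_C m hm i hi q hq) (hw_nonneg q m i)
        _ = (∑ i ∈ Finset.Icc 1 m, upWeightSeq x ρ m i q) * C := by rw [Finset.sum_mul]
        _ = C := by rw [hw_sum m hm q, one_mul]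
    · apply mul_le_mul_of_nonneg_left ?_ hδ.le
      calc (⨅ j : Finset.Icc 1 m, dist q (x j))
          ≤ dist q (x 1) := ciInf_le (Set.finite_range _).bddBelow (⟨1, hmem1 m hm⟩ : Finset.Icc 1 m)
        _ ≤ R := hR hq (hxK 1 le_rfl)
  -- cluster point of the design sequence
  obtain ⟨z, hzK, φ, hφ, hφt⟩ := hKc.tendsto_subseq
    (x := fun n => x (n + 1)) (fun n => hxK (n + 1) (by omega))
  have hclus : ∀ t : ℝ, 0 < t → ∀ N : ℕ, ∃ k, N ≤ k ∧ n₀ ≤ k ∧ 1 ≤ k ∧ dist (x k) z < t := by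
    intro t ht N
    obtain ⟨N₁, hN₁⟩ := Metric.tendsto_atTop.1 hφt t ht
    refine ⟨φ (max N₁ (max N n₀)) + 1, ?_, ?_, by omega, ?_⟩
    · have : max N₁ (max N n₀) ≤ φ (max N₁ (max N n₀)) := hφ.le_apply
      omega
    · have : max N₁ (max N n₀) ≤ φ (max N₁ (max N n₀)) := hφ.le_apply
      omega
    · exact hN₁ _ (le_max_left _ _)
  -- key estimate: kappa at the maximizer is frequently small
  have hkey : ∀ ε : ℝ, 0 < ε → ∀ N : ℕ, ∃ m, N ≤ m ∧ n₀ ≤ m ∧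
      upKappa x s shat ρ δ m (x (m + 1)) ≤ ε := by
    intro ε hε N
    obtain ⟨η, hη, H⟩ := hcont z hzK (ε / 6) (by linarith)
    set t : ℝ := min 1 (min (η / 2) (min (ε / (6 * δ)) (ε * ρ ^ 2 * D₀ / (12 * (C + 1)))))
      with ht_def
    have ht : 0 < t :=
      lt_min one_pos (lt_min (by linarith) (lt_min (by positivity) (by positivity)))
    have ht1 : t ≤ 1 := min_le_left _ _
    have htη : t ≤ η / 2 := le_trans (min_le_right _ _) (min_le_left _ _)
    have htδ : t ≤ ε / (6 * δ) :=
      le_trans (min_le_right _ _) (le_trans (min_le_right _ _) (min_le_left _ _))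
    have htC : t ≤ ε * ρ ^ 2 * D₀ / (12 * (C + 1)) :=
      le_trans (min_le_right _ _) (le_trans (min_le_right _ _) (min_le_right _ _))
    obtain ⟨k, hkN, hkn₀, hk1, hkz⟩ := hclus t ht N
    obtain ⟨k', hk'k, hk'n₀, hk'1, hk'z⟩ := hclus t ht (k + 1)
    refine ⟨k' - 1, by omega, by omega, ?_⟩
    have hm1 : k' - 1 + 1 = k' := by omega
    rw [hm1]
    set m : ℕ := k' - 1 with hm_def
    have hmn₀ : n₀ ≤ m := by omega
    have hkm : k ≤ m := by omega
    have hmem_k : k ∈ Finset.Icc 1 m := Finset.mem_Icc.2 ⟨hk1, hkm⟩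
    have hq'K : x k' ∈ K := hxK k' hk'1
    have hqk : dist (x k') (x k) < 2 * t := by
      calc dist (x k') (x k) ≤ dist (x k') z + dist z (x k) := dist_triangle _ _ _
        _ = dist (x k') z + dist (x k) z := by rw [dist_comm z (x k)]
        _ < 2 * t := by linarith
    unfold upKappa
    -- bound on the delta exploration term
    have hδterm : δ * (⨅ j : Finset.Icc 1 m, dist (x k') (x j)) ≤ ε / 3 := by
      have h1 : (⨅ j : Finset.Icc 1 m, dist (x k') (x j)) ≤ dist (x k') (x k) :=
        ciInf_le (Set.finite_range _).bddBelow (⟨k, hmem_k⟩ : Finset.Icc 1 m)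
      have h2 : δ * (⨅ j : Finset.Icc 1 m, dist (x k') (x j)) ≤ δ * (2 * t) :=
        mul_le_mul_of_nonneg_left (by linarith) hδ.le
      have h4 := mul_le_mul_of_nonneg_left htδ (by positivity : (0:ℝ) ≤ 2 * δ)
      have h5 : 2 * δ * (ε / (6 * δ)) = ε / 3 := by field_simp; ring
      linarith
    -- bound on the i = k term
    have hkterm : upWeightSeq x ρ m k (x k') *
        max ((⨅ j : Finset.Icc 1 m, s (x j)) - shat m k (x k')) 0 ≤ ε / 3 := by
      have hT : max ((⨅ j : Finset.Icc 1 m, s (x j)) - shat m k (x k')) 0 ≤ C :=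
        hT_le_C m hmn₀ k hmem_k (x k') hq'K
      have hnum_le : 1 - Real.exp (-(dist (x k') (x k) ^ 2) / ρ ^ 2) ≤ 4 * t / ρ ^ 2 := by
        have hexp : 1 - Real.exp (-(dist (x k') (x k) ^ 2 / ρ ^ 2))
            ≤ dist (x k') (x k) ^ 2 / ρ ^ 2 := by
          have := Real.add_one_le_exp (-(dist (x k') (x k) ^ 2 / ρ ^ 2)); linarith
        have hd2 : dist (x k') (x k) ^ 2 ≤ 4 * t := by
          have h6 : dist (x k') (x k) ^ 2 ≤ (2 * t) ^ 2 :=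
            pow_le_pow_left₀ dist_nonneg hqk.le 2
          nlinarith
        have h7 : dist (x k') (x k) ^ 2 / ρ ^ 2 ≤ 4 * t / ρ ^ 2 :=
          div_le_div_of_nonneg_right hd2 (by positivity)
        rw [← neg_div] at hexp
        linarith
      have hw_le : upWeightSeq x ρ m k (x k') ≤ (4 * t / ρ ^ 2) / D₀ := by
        unfold upWeightSeq
        exact div_le_div₀ (by positivity) hnum_le hD₀ (hden_ge m hmn₀ (x k'))
      have h8 : upWeightSeq x ρ m k (x k') *
          max ((⨅ j : Finset.Icc 1 m, s (x j)) - shat m k (x k')) 0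
          ≤ ((4 * t / ρ ^ 2) / D₀) * C :=
        mul_le_mul hw_le hT (le_max_right _ _) (by positivity)
      have h9 : ((4 * t / ρ ^ 2) / D₀) * C ≤ ε / 3 := by
        rw [div_div, div_mul_eq_mul_div, div_le_iff₀ (by positivity)]
        have h10 : t * (12 * (C + 1)) ≤ ε * ρ ^ 2 * D₀ := by
          rw [le_div_iff₀ (by positivity)] at htC
          linarith
        have ht' : 0 ≤ t := ht.le
        clear_value t D₀ C
        nlinarith [ht', hC0]
      linarith
    -- bound on the remaining improvement terms
    have hother : ∀ i ∈ Finset.Icc 1 m \ {k},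
        max ((⨅ j : Finset.Icc 1 m, s (x j)) - shat m i (x k')) 0 ≤ ε / 3 := by
      intro i hi
      obtain ⟨him, hik⟩ := Finset.mem_sdiff.1 hi
      have hik' : k ≠ i := fun h => (Finset.notMem_singleton.1 hik) h.symm
      have hinterp' : shat m i (x k) = s (x k) := hinterp m hmn₀ i him k hmem_k hik'
      have hdzk : dist z (x k) < η := by rw [dist_comm]; linarith
      have hdzk' : dist z (x k') < η := by rw [dist_comm]; linarith
      have h1 := H m hmn₀ i him (x k) (hxK k hk1) hdzk
      have h2 := H m hmn₀ i him (x k') hq'K hdzk'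
      have h3 : (⨅ j : Finset.Icc 1 m, s (x j)) ≤ s (x k) := hystar_le m k hmem_k
      rw [abs_lt] at h1 h2
      apply max_le _ (by linarith)
      linarith [h1.1, h1.2, h2.1, h2.2, hinterp'.le, hinterp'.ge]
    have hsplit := Finset.sum_eq_sum_sdiff_singleton_add hmem_k
      (fun i => upWeightSeq x ρ m i (x k') *
        max ((⨅ j : Finset.Icc 1 m, s (x j)) - shat m i (x k')) 0)
    have hsumdiff : ∑ i ∈ Finset.Icc 1 m \ {k}, upWeightSeq x ρ m i (x k') *
        max ((⨅ j : Finset.Icc 1 m, s (x j)) - shat m i (x k')) 0 ≤ ε / 3 := by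
      calc ∑ i ∈ Finset.Icc 1 m \ {k}, upWeightSeq x ρ m i (x k') *
            max ((⨅ j : Finset.Icc 1 m, s (x j)) - shat m i (x k')) 0
          ≤ ∑ i ∈ Finset.Icc 1 m \ {k}, upWeightSeq x ρ m i (x k') * (ε / 3) :=
            Finset.sum_le_sum fun i hi =>
              mul_le_mul_of_nonneg_left (hother i hi) (hw_nonneg _ m i)
        _ = (∑ i ∈ Finset.Icc 1 m \ {k}, upWeightSeq x ρ m i (x k')) * (ε / 3) := by
            rw [Finset.sum_mul]
        _ ≤ 1 * (ε / 3) := by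
            apply mul_le_mul_of_nonneg_right ?_ (by linarith)
            calc ∑ i ∈ Finset.Icc 1 m \ {k}, upWeightSeq x ρ m i (x k')
                ≤ ∑ i ∈ Finset.Icc 1 m, upWeightSeq x ρ m i (x k') :=
                  Finset.sum_le_sum_of_subset_of_nonneg Finset.sdiff_subset
                    (fun i _ _ => hw_nonneg _ m i)
              _ = 1 := hw_sum m hmn₀ (x k')
        _ = ε / 3 := one_mul _
    rw [hsplit]
    linarith
  -- conclusion
  have hS_nonneg : ∀ m : ℕ, 0 ≤ sSup (upKappa x s shat ρ δ m '' K) := by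
    intro m
    apply Real.sSup_nonneg
    rintro y ⟨q, hq, rfl⟩
    exact hκ_nonneg m q
  have hS_le : ∀ m, n₀ ≤ m → sSup (upKappa x s shat ρ δ m '' K)
      ≤ upKappa x s shat ρ δ m (x (m + 1)) := by
    intro m hm
    apply csSup_le (hKne.image _)
    rintro y ⟨q, hq, rfl⟩
    exact hmax m hm q hq
  have hfreq : ∀ ε : ℝ, 0 < ε →
      ∃ᶠ m in Filter.atTop, sSup (upKappa x s shat ρ δ m '' K) ≤ ε := by
    intro ε hε
    rw [Filter.frequently_atTop]
    intro N
    obtain ⟨m, hmN, hmn₀, hκm⟩ := hkey ε hε N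
    exact ⟨m, hmN, (hS_le m hmn₀).trans hκm⟩
  have hbd : Filter.IsBoundedUnder (· ≥ ·) Filter.atTop
      (fun m => sSup (upKappa x s shat ρ δ m '' K)) :=
    Filter.isBoundedUnder_of ⟨0, fun m => hS_nonneg m⟩
  have hub : Filter.IsBoundedUnder (· ≤ ·) Filter.atTop
      (fun m => sSup (upKappa x s shat ρ δ m '' K)) := by
    apply Filter.isBoundedUnder_of_eventually_le (a := C + δ * R)
    filter_upwards [Filter.eventually_ge_atTop n₀] with m hm
    exact (hS_le m hm).trans (hκ_le m hm (x (m + 1)) (hxK (m + 1) (by omega)))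
  have hcb : Filter.IsCoboundedUnder (· ≥ ·) Filter.atTop
      (fun m => sSup (upKappa x s shat ρ δ m '' K)) :=
    hub.isCoboundedUnder_ge
  refine le_antisymm ?_ (Filter.le_liminf_of_le hcb
    (Filter.Eventually.of_forall hS_nonneg))
  apply le_of_forall_pos_le_add
  intro ε hε
  have hle := Filter.liminf_le_of_frequently_le (hfreq ε hε) hbd
  linarith
end
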